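/- arXiv:2010.12994 — 2 statements merged into one kernel-verified Lean document; each statement's English description precedes it below -/
import Mathlib

section
/- Let $\pi_n, \pi : [s,t] \to \mathbb{R}$ be continuous functions with graphs $\mathfrak{g}\pi_n = \{(\pi_n(r),r) : r \in [s,t]\}$ and $\mathfrak{g}\pi$. If $\mathfrak{g}\pi_n \to \mathfrak{g}\pi$ in the Hausdorff metric, then $\pi_n \to \pi$ uniformly on $[s,t]$. -/
open Filter

/-- The graph of `f` over `[s,t]`. -/
def graphOn (f : ℝ → ℝ) (s t : ℝ) : Set (ℝ × ℝ) :=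
  {p : ℝ × ℝ | ∃ r ∈ Set.Icc s t, p = (f r, r)}

/-! A point `(π_n x, x)` of the graph of `π_n` is Hausdorff-close to some point `(π y, y)` of the
graph of `π`, so `π_n x` is close to `π y` with `y` close to `x`; uniform continuity of `π` on the
compact interval then makes `π_n x` close to `π x`, uniformly in `x`. -/

theorem TendstoUniformlyOn.of_forall_exists_dist_lt {ι α β : Type*} [PseudoMetricSpace α]
    [PseudoMetricSpace β] {F : ι → α → β} {f : α → β} {S : Set α} {l : Filter ι}
    (hf : UniformContinuousOn f S)
    (h : ∀ δ > 0, ∀ᶠ n in l, ∀ x ∈ S, ∃ y ∈ S, dist x y < δ ∧ dist (F n x) (f y) < δ) :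
    TendstoUniformlyOn F f l S := by
  rw [Metric.tendstoUniformlyOn_iff]
  intro ε hε
  obtain ⟨δ, hδ, hfδ⟩ := Metric.uniformContinuousOn_iff.1 hf (ε / 2) (half_pos hε)
  filter_upwards [h (min δ (ε / 2)) (lt_min hδ (half_pos hε))] with n hn x hx
  obtain ⟨y, hy, hxy, hFy⟩ := hn x hx
  calc dist (f x) (F n x) ≤ dist (f x) (f y) + dist (F n x) (f y) := dist_triangle_right _ _ _
    _ < ε / 2 + ε / 2 :=
      add_lt_add (hfδ x hx y hy (hxy.trans_le (min_le_left _ _))) (hFy.trans_le (min_le_right _ _))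
    _ = ε := add_halves ε

theorem graphOn_eq_image (f : ℝ → ℝ) (s t : ℝ) :
    graphOn f s t = (fun r => (f r, r)) '' Set.Icc s t := by
  ext p
  simp [graphOn, eq_comm]

theorem isCompact_graphOn {f : ℝ → ℝ} {s t : ℝ} (hf : ContinuousOn f (Set.Icc s t)) :
    IsCompact (graphOn f s t) := by
  rw [graphOn_eq_image]
  exact isCompact_Icc.image_of_continuousOn (hf.prodMk continuousOn_id)

theorem hausdorffEDist_graphOn_ne_top {f g : ℝ → ℝ} {s t : ℝ}
    (hf : ContinuousOn f (Set.Icc s t)) (hg : ContinuousOn g (Set.Icc s t)) :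
    Metric.hausdorffEDist (graphOn f s t) (graphOn g s t) ≠ ⊤ := by
  rcases (Set.Icc s t).eq_empty_or_nonempty with hst | hst
  · simp [graphOn_eq_image, hst]
  · refine Metric.hausdorffEDist_ne_top_of_nonempty_of_bounded ?_ ?_
      (isCompact_graphOn hf).isBounded (isCompact_graphOn hg).isBounded <;>
    · rw [graphOn_eq_image]
      exact hst.image _

theorem exists_dist_lt_of_hausdorffDist_graphOn_lt {f g : ℝ → ℝ} {s t δ x : ℝ}
    (hf : ContinuousOn f (Set.Icc s t)) (hg : ContinuousOn g (Set.Icc s t))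
    (hδ : Metric.hausdorffDist (graphOn f s t) (graphOn g s t) < δ) (hx : x ∈ Set.Icc s t) :
    ∃ y ∈ Set.Icc s t, dist x y < δ ∧ dist (f x) (g y) < δ := by
  have hmem : (f x, x) ∈ graphOn f s t := ⟨x, hx, rfl⟩
  obtain ⟨_, ⟨y, hy, rfl⟩, hdist⟩ :=
    Metric.exists_dist_lt_of_hausdorffDist_lt hmem hδ (hausdorffEDist_graphOn_ne_top hf hg)
  rw [Prod.dist_eq, max_lt_iff] at hdist
  exact ⟨y, hy, hdist.2, hdist.1⟩

theorem tendstoUniformlyOn_of_hausdorff_general (s t : ℝ)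
    (π : ℕ → ℝ → ℝ) (πlim : ℝ → ℝ)
    (hcont : ∀ n, ContinuousOn (π n) (Set.Icc s t))
    (hcontlim : ContinuousOn πlim (Set.Icc s t))
    (hH : Tendsto (fun n => Metric.hausdorffDist (graphOn (π n) s t) (graphOn πlim s t))
      atTop (nhds 0)) :
    TendstoUniformlyOn π πlim atTop (Set.Icc s t) := by
  refine .of_forall_exists_dist_lt (isCompact_Icc.uniformContinuousOn_of_continuous hcontlim)
    fun δ hδ => ?_
  filter_upwards [hH.eventually (gt_mem_nhds hδ)] with n hn x hx
  exact exists_dist_lt_of_hausdorffDist_graphOn_lt (hcont n) hcontlim hn hx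

/-- Hausdorff convergence of graphs of continuous functions implies uniform
convergence of the functions. -/
theorem tendstoUniformlyOn_of_hausdorff (s t : ℝ) (hst : s ≤ t)
    (π : ℕ → ℝ → ℝ) (πlim : ℝ → ℝ)
    (hcont : ∀ n, ContinuousOn (π n) (Set.Icc s t))
    (hcontlim : ContinuousOn πlim (Set.Icc s t))
    (hH : Tendsto (fun n => Metric.hausdorffDist (graphOn (π n) s t) (graphOn πlim s t))
      atTop (nhds 0)) :
    TendstoUniformlyOn π πlim atTop (Set.Icc s t) :=
  tendstoUniformlyOn_of_hausdorff_general s t π πlim hcont hcontlim hH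
end

section
/- Let $B = (B_t)_{t \in [0,1]}$ be a standard Brownian motion and let $r : [0,1] \to \mathbb{R}$ be a fixed continuous function. Then almost surely the function $t \mapsto B_t + r(t)$ attains its maximum over $[0,1]$ at a unique point. -/
/-!
If the continuous path `f = B + r` had two maximizers `x < y` on `[0,1]`, pick rationals
`x < p < q < y`; then the maxima of `f` over `[0,p]` and over `[q,1]` coincide, i.e. the increment
`B q - B p` equals the difference of the maxima of `B t - B p + r t` over `[0,p]` and of
`B t - B q + r t` over `[q,1]`. The latter is a function of increments of `B` outside `(p, q)`,
hence independent of the Gaussian variable `B q - B p` (Brownian motion is a Gaussian process and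
these increments are uncorrelated with it), so for fixed `p, q` the coincidence has probability
zero. Countably many rational pairs finish the proof.
-/

open MeasureTheory ProbabilityTheory

/-- `B` is a standard Brownian motion under `P`: measurable marginals, starts at
`0`, a.s. continuous paths, Gaussian increments of variance `t - s`, and
independent increments. -/
def IsStandardBM {Ω : Type*} [MeasurableSpace Ω] (P : Measure Ω)
    (B : ℝ → Ω → ℝ) : Prop :=
  (∀ t, Measurable (B t)) ∧
  (∀ᵐ ω ∂P, B 0 ω = 0) ∧
  (∀ᵐ ω ∂P, Continuous fun t => B t ω) ∧
  (∀ s t : ℝ, 0 ≤ s → s ≤ t →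
    Measure.map (fun ω => B t ω - B s ω) P = gaussianReal 0 (Real.toNNReal (t - s))) ∧
  (∀ (n : ℕ) (τ : Fin (n + 1) → ℝ), Monotone τ → (∀ i, 0 ≤ τ i) →
    iIndepFun
      (fun i : Fin n => fun ω => B (τ i.succ) ω - B (τ i.castSucc) ω) P)

open Set
open scoped NNReal

/-- A countable form of the supremum of `f` over `[a, b]`, so that it is measurable in `f`. -/
noncomputable def ratSupIcc (f : ℝ → ℝ) (a b : ℝ) : ℝ := ⨆ t : ℚ, f (max a (min b t))

lemma ratSupIcc_eq_of_isMaxOn {f : ℝ → ℝ} (hf : Continuous f) {a b u : ℝ}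
    (hu : u ∈ Icc a b) (hmax : IsMaxOn f (Icc a b) u) : ratSupIcc f a b = f u := by
  have hclamp : ∀ x : ℝ, max a (min b x) ∈ Icc a b := fun x =>
    ⟨le_max_left _ _, max_le (hu.1.trans hu.2) (min_le_left _ _)⟩
  refine ciSup_eq_of_forall_le_of_forall_lt_exists_gt (fun t => hmax (hclamp t)) fun w hw => ?_
  have hopen : IsOpen {x : ℝ | w < f (max a (min b x))} :=
    isOpen_lt continuous_const (by fun_prop)
  refine Rat.denseRange_cast.exists_mem_open hopen ⟨u, ?_⟩
  simpa [min_eq_right hu.2, max_eq_right hu.1] using hw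

lemma ratSupIcc_sub_const {f : ℝ → ℝ} (hf : Continuous f) {a b : ℝ} (hab : a ≤ b) (c : ℝ) :
    ratSupIcc (fun t => f t - c) a b = ratSupIcc f a b - c := by
  obtain ⟨u, hu, hmax⟩ := isCompact_Icc.exists_isMaxOn (nonempty_Icc.2 hab) hf.continuousOn
  rw [ratSupIcc_eq_of_isMaxOn hf hu hmax,
    ratSupIcc_eq_of_isMaxOn (by fun_prop) hu fun x hx => sub_le_sub_right (hmax hx) c]

lemma existsUnique_isMaxOn_Icc_of_ratSupIcc_ne {f : ℝ → ℝ} (hf : Continuous f) {a b : ℝ}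
    (hab : a ≤ b)
    (h : ∀ p q : ℚ, a ≤ p → (p : ℝ) < q → q ≤ b → ratSupIcc f a p ≠ ratSupIcc f q b) :
    ∃! u, u ∈ Icc a b ∧ IsMaxOn f (Icc a b) u := by
  have hlt : ∀ x y, x ∈ Icc a b → y ∈ Icc a b → IsMaxOn f (Icc a b) x →
      IsMaxOn f (Icc a b) y → ¬ x < y := by
    intro x y hx hy hxm hym hxy
    obtain ⟨p, hxp, hpy⟩ := exists_rat_btwn hxy
    obtain ⟨q, hpq, hqy⟩ := exists_rat_btwn hpy
    have hpb : (p : ℝ) ≤ b := (hpq.trans hqy).le.trans hy.2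
    refine h p q (hx.1.trans hxp.le) hpq (hqy.le.trans hy.2) ?_
    rw [ratSupIcc_eq_of_isMaxOn hf ⟨hx.1, hxp.le⟩ (hxm.on_subset (Icc_subset_Icc le_rfl hpb)),
      ratSupIcc_eq_of_isMaxOn hf ⟨hqy.le, hy.2⟩
        (hym.on_subset (Icc_subset_Icc (hx.1.trans (hxp.trans hpq).le) le_rfl))]
    exact le_antisymm (hym hx) (hxm hy)
  obtain ⟨u, hu, hmax⟩ := isCompact_Icc.exists_isMaxOn (nonempty_Icc.2 hab) hf.continuousOn
  refine ⟨u, ⟨hu, hmax⟩, fun v ⟨hv, hvmax⟩ => ?_⟩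
  exact le_antisymm (not_lt.1 (hlt u v hu hv hmax hvmax)) (not_lt.1 (hlt v u hv hu hvmax hmax))

namespace ProbabilityTheory

variable {Ω : Type*} [MeasurableSpace Ω] {P : Measure Ω}

lemma IndepFun.ae_ne {β : Type*} [MeasurableSpace β] [MeasurableEq β] [IsFiniteMeasure P]
    {X Y : Ω → β} (hXY : IndepFun X Y P) (hX : AEMeasurable X P) (hY : AEMeasurable Y P)
    [NullSingletonClass (P.map Y)] :
    ∀ᵐ ω ∂P, X ω ≠ Y ω := by
  have hslice : ∀ x, P.map Y (Prod.mk x ⁻¹' diagonal β) = 0 := fun x => by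
    simp [preimage, measure_singleton]
  rw [ae_iff]
  simp only [ne_eq, not_not]
  change P ((fun ω => (X ω, Y ω)) ⁻¹' diagonal β) = 0
  rw [← Measure.map_apply_of_aemeasurable (hX.prodMk hY) measurableSet_diagonal,
    (indepFun_iff_map_prod_eq_prod_map_map hX hY).1 hXY, Measure.prod_apply measurableSet_diagonal]
  simp [hslice]

lemma IsGaussianProcess.increments {T S : Type*} {X : T → Ω → ℝ} (hX : IsGaussianProcess X P)
    (a b : S → T) : IsGaussianProcess (fun s ω => X (a s) ω - X (b s) ω) P := by
  classical
  refine hX.of_isGaussianProcess fun s => ⟨{a s, b s},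
    { toFun x := x ⟨a s, by simp⟩ - x ⟨b s, by simp⟩
      map_add' x y := by simp; abel
      map_smul' c x := by simp; ring }, fun ω => by simp⟩

lemma IsPreBrownianReal.indepFun_sub_of_sameSide {X : ℝ≥0 → Ω → ℝ} (hX : IsPreBrownianReal X P)
    {p q : ℝ≥0} (hpq : p ≤ q) {S : Type*} {a b : S → ℝ≥0}
    (hab : ∀ s, (a s ≤ p ∧ b s ≤ p) ∨ (q ≤ a s ∧ q ≤ b s)) :
    IndepFun (fun ω => X q ω - X p ω) (fun ω s => X (a s) ω - X (b s) ω) P := by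
  have := hX.isGaussianProcess.isProbabilityMeasure
  have hL2 : ∀ t, MemLp (X t) 2 P := fun t =>
    (hX.isGaussianProcess.hasGaussianLaw_eval t).memLp_two
  have hjoint : IsGaussianProcess (Sum.elim (fun (_ : Unit) ω => X q ω - X p ω)
      fun s ω => X (a s) ω - X (b s) ω) P := by
    convert hX.isGaussianProcess.increments (Sum.elim (fun _ => q) a) (Sum.elim (fun _ => p) b)
      using 1
    ext (_ | s) <;> rfl
  have hcov : ∀ s, cov[fun ω => X q ω - X p ω, fun ω => X (a s) ω - X (b s) ω; P] = 0 := by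
    intro s
    rw [covariance_fun_sub_left (Z := fun ω => X (a s) ω - X (b s) ω) (hL2 q) (hL2 p)
        ((hL2 _).sub (hL2 _)),
      covariance_fun_sub_right (hL2 q) (hL2 _) (hL2 _),
      covariance_fun_sub_right (hL2 p) (hL2 _) (hL2 _)]
    -- `t ↦ min q t - min p t` is constant on `[0, p]` and on `[q, ∞)`.
    simp only [hX.covariance_eval]
    rcases hab s with ⟨ha, hb⟩ | ⟨ha, hb⟩
    · simp [ha, hb, ha.trans hpq, hb.trans hpq]
    · simp [ha, hb, hpq.trans ha, hpq.trans hb]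
  have hmeas : ∀ s t, AEMeasurable (fun ω => X s ω - X t ω) P := fun s t =>
    (hX.aemeasurable s).sub (hX.aemeasurable t)
  exact (hjoint.indepFun_of_covariance_eq_zero (fun _ => hmeas q p) (fun s => hmeas _ _)
    fun _ s => hcov s).comp (measurable_pi_apply ()) measurable_id

end ProbabilityTheory

section IsStandardBM

variable {Ω : Type*} [MeasurableSpace Ω] {P : Measure Ω} {B : ℝ → Ω → ℝ}

lemma IsStandardBM.isPreBrownianReal (hB : IsStandardBM P B) :
    IsPreBrownianReal (fun t : ℝ≥0 => B t) P := by
  obtain ⟨hmeas, h0, -, hlaw, hincr⟩ := hB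
  refine HasIndepIncrements.isPreBrownianReal_of_hasLaw (fun t => ?_) fun n τ hτ => ?_
  · have hinc : HasLaw (fun ω => B t ω - B 0 ω) (gaussianReal 0 t) P :=
      ⟨((hmeas t).sub (hmeas 0)).aemeasurable, by simpa using hlaw 0 t le_rfl t.2⟩
    exact hinc.congr (by filter_upwards [h0] with ω hω; simp [hω])
  · exact hincr n (fun i => τ i) (NNReal.coe_mono.comp hτ) fun i => (τ i).2

lemma IsStandardBM.indepFun_sub_of_sameSide (hB : IsStandardBM P B) {p q : ℝ} (hp : 0 ≤ p)
    (hpq : p ≤ q) {S : Type*} {a b : S → ℝ}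
    (hab : ∀ s, (a s ∈ Icc 0 p ∧ b s ∈ Icc 0 p) ∨ (q ≤ a s ∧ q ≤ b s)) :
    IndepFun (fun ω => B q ω - B p ω) (fun ω s => B (a s) ω - B (b s) ω) P := by
  have hnonneg : ∀ s, 0 ≤ a s ∧ 0 ≤ b s := fun s => by
    rcases hab s with ⟨ha, hb⟩ | ⟨ha, hb⟩
    · exact ⟨ha.1, hb.1⟩
    · exact ⟨(hp.trans hpq).trans ha, (hp.trans hpq).trans hb⟩
  have hind := hB.isPreBrownianReal.indepFun_sub_of_sameSide (Real.toNNReal_le_toNNReal hpq)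
    (a := fun s => (a s).toNNReal) (b := fun s => (b s).toNNReal) fun s => by
      rcases hab s with ⟨ha, hb⟩ | ⟨ha, hb⟩
      · exact Or.inl ⟨Real.toNNReal_le_toNNReal ha.2, Real.toNNReal_le_toNNReal hb.2⟩
      · exact Or.inr ⟨Real.toNNReal_le_toNNReal ha, Real.toNNReal_le_toNNReal hb⟩
  simpa [Real.coe_toNNReal _ hp, Real.coe_toNNReal _ (hp.trans hpq), hnonneg] using hind

lemma IsStandardBM.ae_ratSupIcc_ne (hB : IsStandardBM P B) {r : ℝ → ℝ} (hr : Continuous r)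
    {a p q c : ℝ} (ha : 0 ≤ a) (hap : a ≤ p) (hpq : p < q) (hqc : q ≤ c) :
    ∀ᵐ ω ∂P, ratSupIcc (fun t => B t ω + r t) a p ≠ ratSupIcc (fun t => B t ω + r t) q c := by
  have := hB.isPreBrownianReal.isGaussianProcess.isProbabilityMeasure
  let L : ℚ → ℝ := fun t => max a (min p t)
  let R : ℚ → ℝ := fun t => max q (min c t)
  have hind := hB.indepFun_sub_of_sameSide (ha.trans hap) hpq.le (a := Sum.elim L R)
    (b := Sum.elim (fun _ => p) fun _ => q) <| by
      rintro (t | t)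
      · exact Or.inl ⟨⟨ha.trans (le_max_left _ _), max_le hap (min_le_left _ _)⟩,
          ⟨ha.trans hap, le_rfl⟩⟩
      · exact Or.inr ⟨le_max_left _ _, le_rfl⟩
  -- On continuous paths, `Φ` of these increments equals `B q - B p` iff the two suprema agree.
  let Φ : (ℚ ⊕ ℚ → ℝ) → ℝ := fun y =>
    (⨆ t, (y (.inl t) + r (L t))) - ⨆ t, (y (.inr t) + r (R t))
  have hΦ : Measurable Φ :=
    (Measurable.iSup fun t => (measurable_pi_apply (Sum.inl t)).add_const _).sub
      (Measurable.iSup fun t => (measurable_pi_apply (Sum.inr t)).add_const _)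
  have hatomless : NullSingletonClass (P.map fun ω => B q ω - B p ω) := by
    rw [hB.2.2.2.1 p q (ha.trans hap) hpq.le]
    exact nullSingletonClass_gaussianReal (by simpa using hpq)
  have hne := IndepFun.ae_ne (Y := fun ω => B q ω - B p ω) (hind.symm.comp hΦ measurable_id)
    (hΦ.comp (measurable_pi_lambda _ fun s => (hB.1 _).sub (hB.1 _))).aemeasurable
    ((hB.1 q).sub (hB.1 p)).aemeasurable
  filter_upwards [hB.2.2.1, hne] with ω hcont hω heq
  have hf : Continuous fun t => B t ω + r t := hcont.add hr
  refine hω ?_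
  simp only [Function.comp_apply, Φ, Sum.elim_inl, Sum.elim_inr, sub_add_eq_add_sub]
  have hleft := ratSupIcc_sub_const hf hap (B p ω)
  have hright := ratSupIcc_sub_const hf hqc (B q ω)
  simp only [ratSupIcc] at hleft hright heq
  rw [hleft, hright, heq]
  ring

end IsStandardBM

theorem bm_plus_drift_unique_argmax_general
    {Ω : Type*} [MeasurableSpace Ω] (P : Measure Ω)
    (B : ℝ → Ω → ℝ) (hB : IsStandardBM P B)
    (r : ℝ → ℝ) (hr : Continuous r) :
    ∀ᵐ ω ∂P, ∃! u : ℝ, u ∈ Set.Icc (0:ℝ) 1 ∧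
      IsMaxOn (fun t => B t ω + r t) (Set.Icc (0:ℝ) 1) u := by
  have hsep : ∀ᵐ ω ∂P, ∀ p q : ℚ, 0 ≤ (p : ℝ) → (p : ℝ) < q → (q : ℝ) ≤ 1 →
      ratSupIcc (fun t => B t ω + r t) 0 p ≠ ratSupIcc (fun t => B t ω + r t) q 1 := by
    simp only [ae_all_iff, Filter.eventually_imp_distrib_left]
    exact fun p q hp hpq hq => hB.ae_ratSupIcc_ne hr le_rfl hp hpq hq
  filter_upwards [hB.2.2.1, hsep] with ω hcont hω
  exact existsUnique_isMaxOn_Icc_of_ratSupIcc_ne (hcont.add hr) zero_le_one hω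

/-- A Brownian motion plus a fixed continuous drift attains its maximum on
`[0,1]` at a unique point almost surely. -/
theorem bm_plus_drift_unique_argmax
    {Ω : Type*} [MeasurableSpace Ω] (P : Measure Ω) [IsProbabilityMeasure P]
    (B : ℝ → Ω → ℝ) (hB : IsStandardBM P B)
    (r : ℝ → ℝ) (hr : Continuous r) :
    ∀ᵐ ω ∂P, ∃! u : ℝ, u ∈ Set.Icc (0:ℝ) 1 ∧
      IsMaxOn (fun t => B t ω + r t) (Set.Icc (0:ℝ) 1) u :=
  bm_plus_drift_unique_argmax_general P B hB r hr
end
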